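/- Fix α > 0. For all x, y ∈ ℝ define d(x,y) = (1/(2α))·(2√α·x·(arctan(√α·x) − arctan(√α·y)) + log((1 + α·y²)/(1 + α·x²))). Then d(x,y) equals the Bregman divergence φ(x) − φ(y) − (x−y)·φ′(y) of the function φ(t) = (t/√α)·arctan(√α·t) − (1/(2α))·log(1 + α·t²); moreover d(x,y) ≥ 0 with equality if and only if x = y. -/

import Mathlib

open Set Real

/-!
The function `φ` has derivative `arctan (√α t) / √α`, which is strictly increasing, so `φ` is
strictly convex on `ℝ`. The closed form of `d` is the Bregman divergence of `φ` after expanding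
`log ((1 + α y²) / (1 + α x²))`, and the Bregman divergence of a strictly convex differentiable
function is positive off the diagonal because the tangent line at `y` lies strictly below the
graph.
-/

noncomputable section

def bregmanDiv (φ : ℝ → ℝ) (x y : ℝ) : ℝ := φ x - φ y - (x - y) * deriv φ y

@[simp]
lemma bregmanDiv_self (φ : ℝ → ℝ) (x : ℝ) : bregmanDiv φ x x = 0 := by
  simp [bregmanDiv]

namespace StrictConvexOn

variable {S : Set ℝ} {φ : ℝ → ℝ} {x y : ℝ}

lemma bregmanDiv_pos (hφ : StrictConvexOn ℝ S φ) (hx : x ∈ S) (hy : y ∈ S) (hxy : x ≠ y)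
    (hd : DifferentiableAt ℝ φ y) : 0 < bregmanDiv φ x y := by
  unfold bregmanDiv
  rcases hxy.lt_or_gt with hlt | hgt
  · have hslope := hφ.slope_lt_deriv hx hy hlt hd
    rw [slope_def_field, div_lt_iff₀ (sub_pos.mpr hlt)] at hslope
    linarith
  · have hslope := hφ.deriv_lt_slope hy hx hgt hd
    rw [slope_def_field, lt_div_iff₀ (sub_pos.mpr hgt)] at hslope
    linarith

lemma bregmanDiv_nonneg (hφ : StrictConvexOn ℝ S φ) (hx : x ∈ S) (hy : y ∈ S)
    (hd : DifferentiableAt ℝ φ y) : 0 ≤ bregmanDiv φ x y := by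
  rcases eq_or_ne x y with rfl | hxy
  · simp
  · exact (hφ.bregmanDiv_pos hx hy hxy hd).le

lemma bregmanDiv_eq_zero_iff (hφ : StrictConvexOn ℝ S φ) (hx : x ∈ S) (hy : y ∈ S)
    (hd : DifferentiableAt ℝ φ y) : bregmanDiv φ x y = 0 ↔ x = y := by
  refine ⟨fun h ↦ ?_, fun h ↦ h ▸ bregmanDiv_self φ x⟩
  by_contra hxy
  exact (hφ.bregmanDiv_pos hx hy hxy hd).ne' h

end StrictConvexOn

def arctanPotential (α t : ℝ) : ℝ :=
  (t / √α) * arctan (√α * t) - (1 / (2 * α)) * log (1 + α * t ^ 2)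

section arctanPotential

variable {α : ℝ}

lemma one_add_mul_sq_pos (hα : 0 ≤ α) (t : ℝ) : 0 < 1 + α * t ^ 2 := by
  positivity

lemma hasDerivAt_arctanPotential (hα : 0 < α) (t : ℝ) :
    HasDerivAt (arctanPotential α) (arctan (√α * t) / √α) t := by
  have hsq : √α ^ 2 = α := sq_sqrt hα.le
  have hpos := one_add_mul_sq_pos hα.le t
  have harctan : HasDerivAt (fun u ↦ arctan (√α * u)) (√α / (1 + α * t ^ 2)) t := by
    refine ((hasDerivAt_id t).const_mul √α).arctan.congr_deriv ?_
    rw [id, mul_pow, hsq]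
    ring
  have hlog : HasDerivAt (fun u ↦ log (1 + α * u ^ 2)) (2 * α * t / (1 + α * t ^ 2)) t := by
    convert (((hasDerivAt_pow 2 t).const_mul α).const_add 1).log hpos.ne' using 1
    ring
  refine ((((hasDerivAt_id t).div_const √α).mul harctan).sub
    (hlog.const_mul (1 / (2 * α)))).congr_deriv ?_
  rw [id]
  field_simp
  ring

lemma deriv_arctanPotential (hα : 0 < α) :
    deriv (arctanPotential α) = fun t ↦ arctan (√α * t) / √α :=
  funext fun t ↦ (hasDerivAt_arctanPotential hα t).deriv

lemma strictConvexOn_arctanPotential (hα : 0 < α) :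
    StrictConvexOn ℝ univ (arctanPotential α) := by
  have hs : 0 < √α := sqrt_pos.mpr hα
  refine StrictMono.strictConvexOn_univ_of_deriv
    (continuous_iff_continuousAt.mpr fun t ↦ (hasDerivAt_arctanPotential hα t).continuousAt) ?_
  rw [deriv_arctanPotential hα]
  exact fun a b hab ↦ div_lt_div_of_pos_right
    (arctan_strictMono (mul_lt_mul_of_pos_left hab hs)) hs

lemma bregmanDiv_arctanPotential (hα : 0 < α) (x y : ℝ) :
    bregmanDiv (arctanPotential α) x y = (1 / (2 * α)) *
      (2 * √α * x * (arctan (√α * x) - arctan (√α * y))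
        + log ((1 + α * y ^ 2) / (1 + α * x ^ 2))) := by
  rw [bregmanDiv, deriv_arctanPotential hα, arctanPotential, arctanPotential,
    log_div (one_add_mul_sq_pos hα.le y).ne' (one_add_mul_sq_pos hα.le x).ne']
  obtain ⟨s, hs, rfl⟩ : ∃ s, 0 < s ∧ α = s ^ 2 := ⟨√α, sqrt_pos.mpr hα, (sq_sqrt hα.le).symm⟩
  rw [sqrt_sq hs.le]
  field_simp
  ring

end arctanPotential

end

/-- The parametrized Bregman divergence for real continuous data:
`d(x,y) = (1/(2α))(2√α x (arctan(√α x) − arctan(√α y)) + log((1+αy²)/(1+αx²)))`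
equals the Bregman divergence of `φ(t) = (t/√α) arctan(√α t) − (1/(2α)) log(1+αt²)`,
is nonnegative, and vanishes iff `x = y`. -/
theorem stmt_14 (α : ℝ) (hα : 0 < α)
    (φ : ℝ → ℝ)
    (hφ : ∀ t, φ t = (t / Real.sqrt α) * Real.arctan (Real.sqrt α * t)
      - (1 / (2 * α)) * Real.log (1 + α * t ^ 2))
    (d : ℝ → ℝ → ℝ)
    (hd : ∀ x y, d x y = (1 / (2 * α)) *
      (2 * Real.sqrt α * x * (Real.arctan (Real.sqrt α * x) - Real.arctan (Real.sqrt α * y))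
        + Real.log ((1 + α * y ^ 2) / (1 + α * x ^ 2))))
    (x y : ℝ) :
    d x y = φ x - φ y - (x - y) * deriv φ y ∧
    0 ≤ d x y ∧ (d x y = 0 ↔ x = y) := by
  obtain rfl : φ = arctanPotential α := funext hφ
  have hd_eq : d x y = bregmanDiv (arctanPotential α) x y := by
    rw [hd, bregmanDiv_arctanPotential hα]
  have hconvex := strictConvexOn_arctanPotential hα
  have hdiff := (hasDerivAt_arctanPotential hα y).differentiableAt
  rw [hd_eq]
  exact ⟨rfl, hconvex.bregmanDiv_nonneg (mem_univ x) (mem_univ y) hdiff,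
    hconvex.bregmanDiv_eq_zero_iff (mem_univ x) (mem_univ y) hdiff⟩
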